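/- arXiv:2601.19900 — 3 statements merged into one kernel-verified Lean document; each statement's English description precedes it below -/
import Mathlib

section
/- Truncating fraction bits with indices in T ⊆ {0,...,22} and filling them with the optimal dummy (bit max T set to 1, rest 0) changes any normalized IEEE-754-style value y with exponent field e by an absolute error at most 2^(e−127) · 2^(max T − 22), i.e., a relative error at most 2^(max T − 22) of the value's magnitude scale. -/
/-- Truncating fraction bits with indices in `T ⊆ {0,…,22}` and filling
with the optimal dummy (bit `max T` set to 1, rest 0) changes a normalized
IEEE-754-style value with exponent field `e` by at most
`2^(e-127) · 2^(max T - 22)` in absolute value. -/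
theorem stmt_12 (T : Finset ℕ) (hT : T.Nonempty) (hsub : T ⊆ Finset.range 23)
    (t : ℕ) (ht : t = T.max' hT)
    (s : Fin 2) (e : ℕ) (he : e ≤ 255) (f : ℕ → Fin 2)
    (y ytrunc : ℝ)
    (hy : y = (-1) ^ (s : ℕ) * (2 : ℝ) ^ ((e : ℤ) - 127)
        * (1 + ∑ i ∈ Finset.range 23, ((f i : ℕ) : ℝ) * (2 : ℝ) ^ ((i : ℤ) - 23)))
    (hyt : ytrunc = (-1) ^ (s : ℕ) * (2 : ℝ) ^ ((e : ℤ) - 127)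
        * (1 + ∑ i ∈ Finset.range 23,
            (if i ∈ T then (if i = t then (1 : ℝ) else 0) else ((f i : ℕ) : ℝ))
              * (2 : ℝ) ^ ((i : ℤ) - 23))) :
    |ytrunc - y| ≤ (2 : ℝ) ^ ((e : ℤ) - 127) * (2 : ℝ) ^ ((t : ℤ) - 22) := by
  set g : ℕ → ℝ := fun i => if i ∈ T then (if i = t then (1 : ℝ) else 0) else ((f i : ℕ) : ℝ) with hg
  have hfac : ytrunc - y = (-1) ^ (s : ℕ) * (2 : ℝ) ^ ((e : ℤ) - 127)
      * (∑ i ∈ Finset.range 23, (g i - ((f i : ℕ) : ℝ)) * (2 : ℝ) ^ ((i : ℤ) - 23)) := by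
    rw [hy, hyt]
    simp only [sub_mul, Finset.sum_sub_distrib]
    ring
  have hApos : (0:ℝ) < (2 : ℝ) ^ ((e : ℤ) - 127) := by positivity
  rw [hfac, abs_mul, abs_mul, abs_pow, abs_neg, abs_one, one_pow, one_mul,
    abs_of_pos hApos]
  refine mul_le_mul_of_nonneg_left ?_ hApos.le
  calc |∑ i ∈ Finset.range 23, (g i - ((f i : ℕ) : ℝ)) * (2 : ℝ) ^ ((i : ℤ) - 23)|
      ≤ ∑ i ∈ Finset.range 23, |(g i - ((f i : ℕ) : ℝ)) * (2 : ℝ) ^ ((i : ℤ) - 23)| :=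
        Finset.abs_sum_le_sum_abs _ _
    _ ≤ ∑ i ∈ Finset.range 23, (if i ∈ T then (2 : ℝ) ^ ((i : ℤ) - 23) else 0) := by
        refine Finset.sum_le_sum fun i _ => ?_
        by_cases hi : i ∈ T
        · simp only [hi, if_true]
          rw [abs_mul, abs_of_pos (by positivity : (0:ℝ) < (2:ℝ) ^ ((i : ℤ) - 23))]
          refine mul_le_of_le_one_left (by positivity) ?_
          have hlt := (f i).isLt
          have hfi : ((f i : ℕ)) = 0 ∨ ((f i : ℕ)) = 1 := by omega
          simp only [hg, hi, if_true]
          rcases hfi with h | h <;> rw [h] <;> split <;> norm_num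
        · simp [hg, hi]
    _ = ∑ i ∈ T, (2 : ℝ) ^ ((i : ℤ) - 23) := by
        rw [Finset.sum_ite_mem, Finset.inter_eq_right.mpr hsub]
    _ ≤ ∑ i ∈ Finset.range (t + 1), (2 : ℝ) ^ ((i : ℤ) - 23) := by
        refine Finset.sum_le_sum_of_subset_of_nonneg ?_ (fun i _ _ => by positivity)
        intro i hi
        simp only [Finset.mem_range, Nat.lt_succ_iff]
        exact ht ▸ T.le_max' i hi
    _ ≤ (2 : ℝ) ^ ((t : ℤ) - 22) := by
        have : ∀ i : ℕ, (2 : ℝ) ^ ((i : ℤ) - 23) = (2:ℝ)^i * (2:ℝ)^(-23 : ℤ) := by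
          intro i
          rw [← zpow_natCast (2:ℝ) i, ← zpow_add₀ (by norm_num : (2:ℝ) ≠ 0)]
          ring_nf
        simp only [this]
        rw [← Finset.sum_mul, geom_sum_eq (by norm_num) (t+1)]
        have h22 : ((t : ℤ) - 22) = ((t+1 : ℕ) : ℤ) + (-23 : ℤ) := by push_cast; ring
        rw [h22, zpow_add₀ (by norm_num : (2:ℝ) ≠ 0), zpow_natCast]
        have : (0:ℝ) < (2:ℝ)^(-23:ℤ) := by positivity
        nlinarith [pow_pos (by norm_num : (0:ℝ) < 2) (t+1)]
end

section
/- Among all constant fill patterns d : T → {0,1} for truncated bits (with T a nonempty finite set of naturals, uniform true bits b : T → {0,1}, and S(b) = Σ_{k∈T} b(k) 2^k), the pattern d* with d*(max T) = 1 and d*(k) = 0 otherwise minimizes E[(D − S)²] over all binary patterns D = Σ_{k∈T} d(k) 2^k, provided 2^(max T) ≥ 1 + Σ_{k∈T, k<max T} 2^k is used to show D* is a closest achievable binary value to the real optimum (1/2)Σ_{k∈T}2^k. -/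
/-- Flipping a `Fin 2` value is an involution. -/
private lemma fin2_flip_invol : ∀ x : Fin 2, 1 - (1 - x) = x := by decide

private lemma fin2_flip_cast (x : Fin 2) : (((1 - x : Fin 2) : ℕ) : ℝ) = 1 - ((x : ℕ) : ℝ) := by
  fin_cases x <;> norm_num

/-- Among all binary fill patterns `d : T → {0,1}` with value
`D = Σ_{k∈T} d k · 2^k`, the pattern `d*` setting only bit `max T`
(giving `D* = 2^(max T)`) minimizes the expected squared error
`E[(D - S)^2]` against uniform true bits `b` with
`S b = Σ_{k∈T} b k · 2^k`. -/
theorem stmt_13 (T : Finset ℕ) (hT : T.Nonempty)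
    (S : ({k // k ∈ T} → Fin 2) → ℝ)
    (hS : ∀ b, S b = ∑ k ∈ T.attach, ((b k : ℕ) : ℝ) * 2 ^ (k : ℕ)) :
    ∀ d : {k // k ∈ T} → Fin 2,
      (∑ b : {k // k ∈ T} → Fin 2, ((2 : ℝ) ^ (T.max' hT) - S b) ^ 2) / 2 ^ T.card
        ≤ (∑ b : {k // k ∈ T} → Fin 2,
            ((∑ k ∈ T.attach, ((d k : ℕ) : ℝ) * 2 ^ (k : ℕ)) - S b) ^ 2) / 2 ^ T.card := by
  intro d
  set m := T.max' hT with hm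
  have hmT : m ∈ T := T.max'_mem hT
  set M : ℝ := (2 : ℝ) ^ m with hMdef
  set D : ℝ := ∑ k ∈ T.attach, ((d k : ℕ) : ℝ) * 2 ^ (k : ℕ) with hDdef
  set A : ℝ := ∑ k ∈ T.attach, (2 : ℝ) ^ (k : ℕ) with hAdef
  have hcard : ((Fintype.card ({k // k ∈ T} → Fin 2)) : ℝ) = 2 ^ T.card := by
    simp [Fintype.card_fun]
  -- For each coordinate k, the bit is 1 for exactly half the configurations.
  have heval : ∀ k : {k // k ∈ T},
      ∑ b : {k // k ∈ T} → Fin 2, ((b k : ℕ) : ℝ) = 2 ^ T.card / 2 := by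
    intro k
    have hinv : Function.Involutive
        (fun b : {k // k ∈ T} → Fin 2 => fun j => if j = k then 1 - b j else b j) := by
      intro b; funext j
      by_cases h : j = k <;> simp [h, fin2_flip_invol]
    have hsum : ∑ b : {k // k ∈ T} → Fin 2, (1 - ((b k : ℕ) : ℝ))
        = ∑ b : {k // k ∈ T} → Fin 2, ((b k : ℕ) : ℝ) := by
      have h := Equiv.sum_comp hinv.toPerm (fun b : {k // k ∈ T} → Fin 2 => ((b k : ℕ) : ℝ))
      simpa [fin2_flip_cast] using h
    rw [Finset.sum_sub_distrib, Finset.sum_const, Finset.card_univ, nsmul_eq_mul, mul_one,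
      hcard] at hsum
    linarith
  -- expected value of S
  have hE : ∑ b : {k // k ∈ T} → Fin 2, S b = 2 ^ T.card / 2 * A := by
    simp only [hS]
    rw [Finset.sum_comm]
    rw [hAdef, Finset.mul_sum]
    refine Finset.sum_congr rfl fun k _ => ?_
    rw [← Finset.sum_mul, heval k]
  -- difference of the two sums
  have hdiff : (∑ b : {k // k ∈ T} → Fin 2, (D - S b) ^ 2)
      - (∑ b : {k // k ∈ T} → Fin 2, (M - S b) ^ 2)
      = (D - M) * (2 ^ T.card) * (D + M - A) := by
    rw [← Finset.sum_sub_distrib]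
    have h1 : ∀ b : {k // k ∈ T} → Fin 2,
        (D - S b) ^ 2 - (M - S b) ^ 2 = (D ^ 2 - M ^ 2) - 2 * (D - M) * S b := by
      intro b; ring
    rw [Finset.sum_congr rfl (fun b _ => h1 b), Finset.sum_sub_distrib, Finset.sum_const,
      Finset.card_univ, nsmul_eq_mul, hcard, ← Finset.mul_sum, hE]
    ring
  -- splitting off the top bit
  have hmem : (⟨m, hmT⟩ : {k // k ∈ T}) ∈ T.attach := Finset.mem_attach _ _
  have hDsplit : D = ((d ⟨m, hmT⟩ : ℕ) : ℝ) * 2 ^ m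
      + ∑ k ∈ T.attach.erase ⟨m, hmT⟩, ((d k : ℕ) : ℝ) * 2 ^ (k : ℕ) :=
    (Finset.add_sum_erase _ _ hmem).symm
  have hAsplit : A = 2 ^ m + ∑ k ∈ T.attach.erase ⟨m, hmT⟩, (2 : ℝ) ^ (k : ℕ) :=
    (Finset.add_sum_erase _ _ hmem).symm
  set R : ℝ := ∑ k ∈ T.attach.erase ⟨m, hmT⟩, (2 : ℝ) ^ (k : ℕ) with hRdef
  have hrest_nonneg : (0 : ℝ) ≤ ∑ k ∈ T.attach.erase ⟨m, hmT⟩, ((d k : ℕ) : ℝ) * 2 ^ (k : ℕ) :=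
    Finset.sum_nonneg fun k _ => by positivity
  have hrest_le : (∑ k ∈ T.attach.erase ⟨m, hmT⟩, ((d k : ℕ) : ℝ) * 2 ^ (k : ℕ)) ≤ R := by
    refine Finset.sum_le_sum fun k _ => ?_
    have h1 : ((d k : ℕ) : ℝ) ≤ 1 := by
      have := (d k).is_lt; exact_mod_cast Nat.lt_succ_iff.mp this
    have h2 : (0 : ℝ) ≤ (2 : ℝ) ^ (k : ℕ) := by positivity
    nlinarith
  -- bound on A
  have hA2M : A ≤ 2 * M - 1 := by
    have hA' : A = ∑ k ∈ T, (2 : ℝ) ^ k := Finset.sum_attach _ _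
    have hsub : T ⊆ Finset.range (m + 1) := fun k hk =>
      Finset.mem_range.mpr (Nat.lt_succ_of_le (T.le_max' k hk))
    have hle : A ≤ ∑ k ∈ Finset.range (m + 1), (2 : ℝ) ^ k := by
      rw [hA']
      exact Finset.sum_le_sum_of_subset_of_nonneg hsub fun k _ _ => by positivity
    have hgeom : ∑ k ∈ Finset.range (m + 1), (2 : ℝ) ^ k = 2 ^ (m + 1) - 1 := by
      rw [geom_sum_eq (by norm_num : (2 : ℝ) ≠ 1)]
      norm_num
    rw [hgeom] at hle
    rw [hMdef]
    calc A ≤ 2 ^ (m + 1) - 1 := hle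
      _ = 2 * 2 ^ m - 1 := by ring
  have hRM : R ≤ M - 1 := by
    have := hAsplit
    rw [← hMdef] at this
    linarith [hA2M]
  -- the key nonnegativity
  have hkey : 0 ≤ (D - M) * (2 ^ T.card) * (D + M - A) := by
    have hNpos : (0 : ℝ) < 2 ^ T.card := by positivity
    have hval : (d ⟨m, hmT⟩ : ℕ) = 0 ∨ (d ⟨m, hmT⟩ : ℕ) = 1 := by
      have := (d ⟨m, hmT⟩).is_lt; omega
    rcases hval with h | h
    · -- top bit off : D ≤ R, so both factors nonpositive
      have hDR : D ≤ R := by rw [hDsplit, h]; push_cast; linarith [hrest_le]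
      have h1 : D - M ≤ 0 := by linarith
      have h2 : D + M - A ≤ 0 := by rw [hAsplit, ← hMdef]; linarith
      have h3 : 0 ≤ (M - D) * 2 ^ T.card * (A - D - M) :=
        mul_nonneg (mul_nonneg (by linarith) hNpos.le) (by linarith)
      have h4 : (D - M) * (2:ℝ) ^ T.card * (D + M - A)
          = (M - D) * 2 ^ T.card * (A - D - M) := by ring
      rw [h4]; exact h3
    · -- top bit on : D ≥ M, both factors nonnegative
      have hDM : M ≤ D := by rw [hDsplit, h, hMdef]; push_cast; linarith [hrest_nonneg]
      have h2 : 0 ≤ D + M - A := by linarith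
      have h1 : 0 ≤ D - M := by linarith
      positivity
  -- conclude
  have hNpos : (0 : ℝ) < 2 ^ T.card := by positivity
  rw [div_le_div_iff_of_pos_right hNpos]
  linarith [hdiff, hkey]
end

section
/- Let T ⊆ {0,...,22} be nonempty with t_max = max T, and let weights w(k) = 2^(k−23). For any real c₁ ≠ 0 and c₂, and Y(b) = c₁(1 + c₂ + Σ_{k∈T} b(k) w(k)) with b uniform over {0,1}^T, the value x* = c₁(1 + c₂) + c₁ · 2^(t_max−23) − c₁ Σ_{k∈T, k<t_max} 0 · w(k) obtained by setting bit t_max to 1 and other truncated bits to 0 satisfies |x* − E[Y]| ≤ |x − E[Y]| for every x of the form x = c₁(1 + c₂ + Σ_{k∈T} d(k) w(k)) with d : T → {0,1}. -/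
lemma sum_eval_fun {α : Type*} [Fintype α] [DecidableEq α] (a : α) (f : Fin 2 → ℝ) :
    ∑ b : α → Fin 2, f (b a) = 2 ^ (Fintype.card α - 1) * ∑ v : Fin 2, f v := by
  rw [← Fintype.sum_equiv (Equiv.funSplitAt a (Fin 2)).symm
      (fun p => f p.1) (fun b => f (b a)) (by intro p; simp)]
  rw [Fintype.sum_prod_type]
  simp [Finset.sum_comm, Fintype.card_fun, Fintype.card_subtype_compl, mul_comm]
  ring

/-- Proposition 1 of the paper: among all realizable truncated values
`x = c₁(1 + c₂ + Σ_{k∈T} d k · 2^(k-23))` with `d : T → {0,1}`, the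
pattern setting only bit `t_max = max T`, i.e.
`x* = c₁(1 + c₂) + c₁ · 2^(t_max - 23)`, is closest to the mean
`E[Y] = (Σ_b Y b)/2^|T|` of `Y b = c₁(1 + c₂ + Σ_{k∈T} b k · 2^(k-23))`
over uniform `b`. -/
theorem stmt_15 (T : Finset ℕ) (hT : T.Nonempty) (hsub : T ⊆ Finset.range 23)
    (c₁ c₂ : ℝ) (hc₁ : c₁ ≠ 0)
    (t : ℕ) (ht : t = T.max' hT)
    (w : ℕ → ℝ) (hw : ∀ k, w k = (2 : ℝ) ^ ((k : ℤ) - 23))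
    (Y : ({k // k ∈ T} → Fin 2) → ℝ)
    (hY : ∀ b, Y b = c₁ * (1 + c₂ + ∑ k ∈ T.attach, ((b k : ℕ) : ℝ) * w k))
    (EY : ℝ) (hEY : EY = (∑ b : {k // k ∈ T} → Fin 2, Y b) / 2 ^ T.card)
    (xstar : ℝ) (hx : xstar = c₁ * (1 + c₂) + c₁ * (2 : ℝ) ^ ((t : ℤ) - 23)) :
    ∀ d : {k // k ∈ T} → Fin 2,
      |xstar - EY|
        ≤ |c₁ * (1 + c₂ + ∑ k ∈ T.attach, ((d k : ℕ) : ℝ) * w k) - EY| := by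
  intro d
  have htT : t ∈ T := ht ▸ T.max'_mem hT
  have hwk : ∀ k : ℕ, w k = (2:ℝ)^k / 2^23 := by
    intro k
    rw [hw, zpow_sub₀ (by norm_num : (2:ℝ) ≠ 0), zpow_natCast]
    norm_num
  set S : ℝ := ∑ k ∈ T, w k with hS
  set N : ℝ := ∑ k ∈ T, (2:ℝ)^k with hNdef
  set M : ℝ := ∑ k ∈ T.attach, ((d k : ℕ) : ℝ) * 2^(k:ℕ) with hMdef
  have hSN : S = N / 2^23 := by
    rw [hS, hNdef, Finset.sum_div]
    exact Finset.sum_congr rfl fun k _ => hwk k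
  -- compute EY
  have hcard : Fintype.card {k // k ∈ T} = T.card := Fintype.card_coe T
  have hn1 : 1 ≤ T.card := Finset.card_pos.mpr hT
  have hswap : ∑ b : {k // k ∈ T} → Fin 2, ∑ k ∈ T.attach, ((b k : ℕ) : ℝ) * w k
      = 2^(T.card - 1) * S := by
    rw [Finset.sum_comm]
    have : ∀ k ∈ T.attach, ∑ b : {k // k ∈ T} → Fin 2, ((b k : ℕ) : ℝ) * w k
        = 2^(T.card - 1) * w (k:ℕ) := by
      intro k _
      have := sum_eval_fun k (fun v : Fin 2 => ((v : ℕ) : ℝ) * w (k:ℕ))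
      rw [this, hcard, Fin.sum_univ_succ]
      simp
    rw [Finset.sum_congr rfl this, ← Finset.mul_sum, hS, Finset.sum_attach]
  have hsum : ∑ b : {k // k ∈ T} → Fin 2, Y b
      = 2^T.card * (c₁ * (1 + c₂)) + c₁ * (2^(T.card - 1) * S) := by
    have h1 : ∑ b : {k // k ∈ T} → Fin 2, Y b
        = ∑ b : {k // k ∈ T} → Fin 2,
            (c₁ * (1 + c₂) + c₁ * ∑ k ∈ T.attach, ((b k : ℕ) : ℝ) * w k) := by
      refine Finset.sum_congr rfl fun b _ => ?_
      rw [hY]; ring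
    rw [h1, Finset.sum_add_distrib, Finset.sum_const, ← Finset.mul_sum, hswap]
    simp [Fintype.card_fun, hcard, nsmul_eq_mul]
  have hpow : (2:ℝ)^T.card = 2^(T.card - 1) * 2 := by
    rw [← pow_succ]; congr 1; omega
  have hEY' : EY = c₁ * (1 + c₂) + c₁ * S / 2 := by
    have hp : (2:ℝ)^(T.card - 1) ≠ 0 := by positivity
    rw [hEY, hsum, hpow]
    field_simp
  -- key arithmetic inequality
  have hkle : ∀ k ∈ T, k ≤ t := fun k hk => ht ▸ T.le_max' k hk
  have hN : N ≤ 2^(t+1) - 1 := by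
    have hsub' : T ⊆ Finset.range (t+1) := fun k hk =>
      Finset.mem_range.mpr (Nat.lt_succ_of_le (hkle k hk))
    have h1 : N ≤ ∑ k ∈ Finset.range (t+1), (2:ℝ)^k :=
      Finset.sum_le_sum_of_subset_of_nonneg hsub' (fun k _ _ => by positivity)
    have h2 : ∑ k ∈ Finset.range (t+1), (2:ℝ)^k = ((2:ℝ)^(t+1) - 1)/(2-1) :=
      geom_sum_eq (by norm_num) _
    rw [h2] at h1; linarith
  have h2t1 : (2:ℝ)^(t+1) = 2 * 2^t := by ring
  have hA : (1:ℝ)/2 ≤ (2:ℝ)^t - N/2 := by rw [h2t1] at hN; linarith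
  set a : {k // k ∈ T} := ⟨t, htT⟩ with ha
  have key : |(2:ℝ)^t - N/2| ≤ |M - N/2| := by
    have hat : ((a:ℕ)) = t := rfl
    have hlt2 := (d a).isLt
    rcases (by omega : (d a : ℕ) = 0 ∨ (d a : ℕ) = 1) with hda | hda
    · -- bit t is 0: M ≤ N - 2^t
      have hM : M ≤ N - 2^t := by
        have hsplitM := Finset.add_sum_erase T.attach
          (fun k : {k // k ∈ T} => ((d k : ℕ) : ℝ) * 2^(k:ℕ)) (Finset.mem_attach T a)
        have hsplitN := Finset.add_sum_erase T.attach
          (fun k : {k // k ∈ T} => (2:ℝ)^(k:ℕ)) (Finset.mem_attach T a)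
        have hNa : ∑ k ∈ T.attach, (2:ℝ)^(k:ℕ) = N := Finset.sum_attach T _
        have hle : ∑ k ∈ T.attach.erase a, ((d k : ℕ) : ℝ) * 2^(k:ℕ)
            ≤ ∑ k ∈ T.attach.erase a, (2:ℝ)^(k:ℕ) := by
          refine Finset.sum_le_sum fun k _ => ?_
          have h1 : ((d k : ℕ) : ℝ) ≤ 1 := by
            have := (d k).isLt; exact_mod_cast Nat.lt_succ_iff.mp this
          nlinarith [pow_pos (by norm_num : (0:ℝ) < 2) (k:ℕ)]
        simp only [hda, Nat.cast_zero, zero_mul, zero_add] at hsplitM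
        simp only [hat, hNa] at hsplitN
        rw [hMdef, ← hsplitM]
        linarith
      rw [abs_of_pos (by linarith), abs_of_neg (by linarith)]
      linarith
    · -- bit t is 1: 2^t ≤ M
      have hM : (2:ℝ)^t ≤ M := by
        rw [hMdef]
        have := Finset.single_le_sum
          (f := fun k : {k // k ∈ T} => ((d k : ℕ) : ℝ) * 2^(k:ℕ))
          (fun k _ => by positivity) (Finset.mem_attach T a)
        simpa [hda, hat] using this
      rw [abs_of_pos (by linarith), abs_of_pos (by linarith)]
      linarith
  -- conclude
  have hDM : ∑ k ∈ T.attach, ((d k : ℕ) : ℝ) * w k = M / 2^23 := by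
    rw [hMdef, Finset.sum_div]
    refine Finset.sum_congr rfl fun k _ => ?_
    rw [hwk]; ring
  have lhs_eq : xstar - EY = c₁ * (((2:ℝ)^t - N/2) / 2^23) := by
    have : (2:ℝ)^((t:ℤ) - 23) = (2:ℝ)^t / 2^23 := by rw [← hw t]; exact hwk t
    rw [hx, hEY', this, hSN]; ring
  have rhs_eq : c₁ * (1 + c₂ + ∑ k ∈ T.attach, ((d k : ℕ) : ℝ) * w k) - EY
      = c₁ * ((M - N/2) / 2^23) := by
    rw [hDM, hEY', hSN]; ring
  rw [lhs_eq, rhs_eq, abs_mul, abs_mul, abs_div, abs_div]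
  gcongr
end
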